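/- Let φ := ∀y(∀x(x∈y ↔ x∈x) → y∈y) (asserting self-membership of the co-Russell set) and let β := ∃y∀x(x∈y ↔ ((φ → x∈x) ∧ (¬φ → ¬x∈x))). Then BST ∪ {β} is satisfiable, and the sentence ∃y(∀x(x∈y ↔ x∈x) ∧ y∈y) — asserting that the co-Russell set exists and is a member of itself — holds in every model of BST ∪ {β}. -/

import Mathlib

open FirstOrder FirstOrder.Language

namespace SetParadox

/-- The language with a single binary relation symbol `∈`. -/
def L : Language := ⟨fun _ => Empty, fun n => match n with | 2 => Unit | _ => Empty⟩

/-- The membership relation symbol. -/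
def memRel : L.Relations 2 := Unit.unit

/-- `memF t₁ t₂` is the atomic formula `t₁ ∈ t₂`. -/
def memF {n : ℕ} (t₁ t₂ : L.Term (Empty ⊕ Fin n)) : L.BoundedFormula Empty n :=
  memRel.boundedFormula₂ t₁ t₂

/-- Extensionality: `∀y∀z(∀x(x∈y ↔ x∈z) → y=z)`. -/
def extAx : L.Sentence :=
  ∀' ∀' ((∀' (memF (&2) (&0) ⇔ memF (&2) (&1))) ⟹ ((&0) =' (&1)))

/-- Basic set theory: the theory whose only axiom is extensionality. -/
def BST : L.Theory := {extAx}

/-- The UC-instance `∃y∀x(x∈y ↔ φ(x))` determined by a formula `φ` with one free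
variable `x` (so that `y` does not occur free in `φ`). -/
def UCinst (φ : L.BoundedFormula Empty 1) : L.Sentence :=
  ∃' ∀' (memF (&1) (&0) ⇔ φ.liftAt 1 0)


/-- `φ := ∀y(∀x(x∈y ↔ x∈x) → y∈y)`: the co-Russell set is a member of itself. -/
def coRussellSelfMem : L.Sentence :=
  ∀' ((∀' (memF (&1) (&0) ⇔ memF (&1) (&1))) ⟹ memF (&0) (&0))

/-- `β := ∃y∀x(x∈y ↔ ((φ → x∈x) ∧ (¬φ → ¬x∈x)))`. -/
def betaSent : L.Sentence :=
  UCinst ((coRussellSelfMem.liftAt 1 0 ⟹ memF (&0) (&0)) ⊓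
    (∼(coRussellSelfMem.liftAt 1 0) ⟹ ∼(memF (&0) (&0))))

/-!
Let `b` be the set given by `β`. If `φ` holds, `b` is the co-Russell set, which belongs to itself
by `φ`. If `φ` fails, `b` is the Russell set, which cannot exist. A single point that belongs to
itself is a model of extensionality and of `β`.
-/

section Naive

variable {α : Type*} (r : α → α → Prop)

def IsCoRussell (y : α) : Prop := ∀ x, r x y ↔ r x x

def IsRussell (y : α) : Prop := ∀ x, r x y ↔ ¬ r x x

theorem not_isRussell (y : α) : ¬ IsRussell r y := fun h => iff_not_self (h y)

def CoRussellMemSelf : Prop := ∀ y, IsCoRussell r y → r y y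

def IsBetaSet (y : α) : Prop :=
  ∀ x, r x y ↔ ((CoRussellMemSelf r → r x x) ∧ (¬ CoRussellMemSelf r → ¬ r x x))

theorem exists_isCoRussell_mem_self_of_isBetaSet {b : α} (hb : IsBetaSet r b) :
    ∃ y, IsCoRussell r y ∧ r y y := by
  by_cases hφ : CoRussellMemSelf r
  · have hbc : IsCoRussell r b := fun x => by simpa [hφ] using hb x
    exact ⟨b, hbc, hφ b hbc⟩
  · exact absurd (fun x => by simpa [hφ] using hb x) (not_isRussell r b)

end Naive

variable {M : Type*} [L.Structure M]

def mem (a b : M) : Prop := Structure.RelMap memRel ![a, b]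

@[simp]
lemma realize_memF {n : ℕ} {t₁ t₂ : L.Term (Empty ⊕ Fin n)} {v : Empty → M}
    {xs : Fin n → M} :
    (memF t₁ t₂).Realize v xs ↔
      mem (t₁.realize (Sum.elim v xs)) (t₂.realize (Sum.elim v xs)) := by
  simp [memF, mem]

lemma realize_coRussellSelfMem :
    M ⊨ coRussellSelfMem ↔ CoRussellMemSelf (mem (M := M)) := by
  simp [coRussellSelfMem, Sentence.Realize, Formula.Realize, CoRussellMemSelf, IsCoRussell,
    Fin.snoc]

lemma realize_extAx : M ⊨ extAx ↔ ∀ y z : M, (∀ x, mem x y ↔ mem x z) → y = z := by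
  simp [extAx, Sentence.Realize, Formula.Realize, Fin.snoc]

lemma realize_UCinst (φ : L.BoundedFormula Empty 1) :
    M ⊨ UCinst φ ↔ ∃ y : M, ∀ x, mem x y ↔ φ.Realize default fun _ => x := by
  simp [UCinst, Sentence.Realize, Formula.Realize, Matrix.empty_eq default,
    BoundedFormula.realize_liftAt_one (Nat.zero_le 1), Function.comp_def]

lemma realize_betaSent : M ⊨ betaSent ↔ ∃ y : M, IsBetaSet mem y := by
  rw [betaSent, realize_UCinst]
  simp [IsBetaSet, Formula.boundedFormula_realize_eq_realize,
    ← realize_coRussellSelfMem, Sentence.Realize]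

lemma realize_exists_isCoRussell_mem_self :
    M ⊨ ((∃' ((∀' (memF (&1) (&0) ⇔ memF (&1) (&1))) ⊓ memF (&0) (&0))) : L.Sentence) ↔
      ∃ y : M, IsCoRussell mem y ∧ mem y y := by
  simp [Sentence.Realize, Formula.Realize, IsCoRussell, Fin.snoc]

instance : L.Structure Unit := ⟨fun f => f.elim, fun _ _ => True⟩

instance : Unit ⊨ (BST ∪ {betaSent} : L.Theory) := by
  have hmem (a b : Unit) : mem a b := trivial
  have hφ : CoRussellMemSelf (mem (M := Unit)) := fun y _ => hmem y y
  rw [BST, Theory.model_union_iff, Theory.model_singleton_iff, Theory.model_singleton_iff]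
  exact ⟨realize_extAx.2 fun y z _ => Subsingleton.elim y z,
    realize_betaSent.2 ⟨(), fun x => by simp [hmem, hφ]⟩⟩

/-- `BST ∪ {β}` is satisfiable, and the sentence `∃y(∀x(x∈y ↔ x∈x) ∧ y∈y)` — the
co-Russell set exists and is a member of itself — holds in every model of `BST ∪ {β}`. -/
theorem coRussell_selfMem_provable :
    (BST ∪ {betaSent}).IsSatisfiable ∧
    ((BST ∪ {betaSent}) ⊨ᵇ
      ((∃' ((∀' (memF (&1) (&0) ⇔ memF (&1) (&1))) ⊓ memF (&0) (&0))) : L.Sentence)) := by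
  refine ⟨Theory.Model.isSatisfiable Unit, Theory.models_sentence_iff.2 fun M => ?_⟩
  have hβ : M ⊨ betaSent :=
    Theory.realize_sentence_of_mem (BST ∪ {betaSent}) (Set.mem_union_right _ rfl)
  obtain ⟨b, hb⟩ := realize_betaSent.1 hβ
  exact realize_exists_isCoRussell_mem_self.2 (exists_isCoRussell_mem_self_of_isBetaSet mem hb)

end SetParadox
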